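/- If n ≥ 0 is even and a homogeneous quadratic Δ-cable rooted at θₙ⁽⁰⁾ = Σ_{i=0}^{n}(-1)ⁱxᵢx_{n-i} exists, then its first element above the root is uniquely determined and equals θₙ⁽¹⁾ = Σ_{i=1}^{n+1} (-1)^{i+1} i xᵢ x_{n+1-i}, i.e., Δ(Σ_{i=1}^{n+1} (-1)^{i+1} i xᵢ x_{n+1-i}) = Σ_{i=0}^{n}(-1)ⁱ xᵢ x_{n-i}. -/

import Mathlib

open MvPolynomial

/-- The down operator `Δ` on `Ω = k[x₀, x₁, x₂, ...]`. -/
noncomputable def downOp (k : Type*) [Field k] [CharZero k] :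
    Derivation k (MvPolynomial ℕ k) (MvPolynomial ℕ k) :=
  MvPolynomial.mkDerivation k (fun n => if n = 0 then 0 else X (n - 1))

/-- `θₙ⁽⁰⁾ = Σ_{i=0}^{n} (-1)ⁱ xᵢ x_{n-i}`. -/
noncomputable def theta0 (k : Type*) [Field k] [CharZero k] (n : ℕ) : MvPolynomial ℕ k :=
  ∑ i ∈ Finset.range (n + 1), (-1 : MvPolynomial ℕ k) ^ i * X i * X (n - i)

/-- `θₙ⁽¹⁾ = Σ_{i=1}^{n+1} (-1)^{i+1} i xᵢ x_{n+1-i}` (reindexed with `i = j+1`). -/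
noncomputable def theta1 (k : Type*) [Field k] [CharZero k] (n : ℕ) : MvPolynomial ℕ k :=
  ∑ j ∈ Finset.range (n + 1),
    (-1 : MvPolynomial ℕ k) ^ j * ((j + 1 : ℕ) : MvPolynomial ℕ k) * X (j + 1) * X (n - j)

/-- `Ω_{(2,m)}`, the span of the monomials `xᵢ x_{m-i}` for `0 ≤ i ≤ m`. -/
noncomputable def quadSpace (k : Type*) [Field k] [CharZero k] (m : ℕ) :
    Submodule k (MvPolynomial ℕ k) :=
  Submodule.span k {p | ∃ i ≤ m, p = X i * X (m - i)}

/-!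
Write an element of `Ω_{(2,n+1)}` as `p = Σ cᵢ xᵢ x_{n+1-i}`; then
`Δp = Σ (cⱼ + c_{j+1}) xⱼ x_{n-j}`. A form `Σ dⱼ xⱼ x_{n-j}` vanishes exactly when
`d_a + d_{n-a} = 0` for all `a`, as `∂_a ∂_{n-a}` reads off that sum. So if `Δp = 0`, the
symmetrised coefficients `s_a = c_a + c_{n+1-a}` alternate in sign along `0, …, n+1`; they are
also symmetric, and `n + 1` is odd, so `s₀ = s_{n+1} = -s₀`, whence `s = 0` and `p = 0`.
Thus `Δ` is injective on `Ω_{(2,n+1)}`, and `θₙ⁽¹⁾`, whose image `θₙ⁽⁰⁾` is computed directly,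
is the only preimage of `θₙ⁽⁰⁾` there.
-/

open Finset

lemma eq_zero_of_add_succ_eq_zero_of_even {R : Type*} [Ring R] [NoZeroDivisors R] [CharZero R]
    {s : ℕ → R} {n : ℕ} (hn : Even n) (hsucc : ∀ a ≤ n, s a + s (a + 1) = 0)
    (hsymm : s (n + 1) = s 0) : ∀ a ≤ n + 1, s a = 0 := by
  have hpow : ∀ a ≤ n + 1, s a = (-1) ^ a * s 0 := by
    intro a ha
    induction a with
    | zero => simp
    | succ a ih =>
      rw [eq_neg_of_add_eq_zero_right (hsucc a (by omega)), ih (by omega), pow_succ]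
      noncomm_ring
  have hs₀ : s 0 = 0 := by
    have h := hpow (n + 1) le_rfl
    rw [hsymm, pow_succ, hn.neg_one_pow, one_mul, neg_one_mul, self_eq_neg] at h
    exact h
  intro a ha
  rw [hpow a ha, hs₀, mul_zero]

section

variable {R : Type*} [CommSemiring R]

lemma sum_smul_X_mul_X_reflect (d : ℕ → R) (n : ℕ) :
    ∑ j ∈ range (n + 1), d (n - j) • (X j * X (n - j)) =
      ∑ j ∈ range (n + 1), d j • (X j * X (n - j) : MvPolynomial ℕ R) := by
  rw [← sum_range_reflect]
  refine sum_congr rfl fun j hj => ?_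
  rw [Nat.add_sub_cancel, Nat.sub_sub_self (Nat.lt_succ_iff.mp (mem_range.mp hj)), mul_comm]


lemma pderiv_pderiv_sum_smul_X_mul_X (d : ℕ → R) {n a : ℕ} (ha : a ≤ n) :
    pderiv a (pderiv (n - a) (∑ j ∈ range (n + 1), d j • (X j * X (n - j)))) =
      C (d a + d (n - a)) := by
  have hterm : ∀ j ∈ range (n + 1), pderiv a (pderiv (n - a) (d j • (X j * X (n - j)))) =
      C (if j = a then d j else 0) + C (if j = n - a then d j else 0) := by
    intro j hj
    have hj : j ≤ n := Nat.lt_succ_iff.mp (mem_range.mp hj)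
    simp only [Derivation.map_smul, Derivation.leibniz, pderiv_X, Pi.single_apply]
    have hja : n - j = n - a ↔ j = a := by omega
    simp only [hja]
    -- for `j = a = n - a` the two Leibniz terms coincide, giving `∂ₐ² xₐ² = 2`
    by_cases h₁ : j = a <;> by_cases h₂ : j = n - a
    · subst h₁
      rw [← h₂]
      simp [smul_eq_C_mul]
    · subst h₁
      simp [h₂, smul_eq_C_mul]
    · simp [if_neg h₁, if_pos h₂, show n - j = a by omega, smul_eq_C_mul]
    · simp [h₁, h₂]
  rw [map_sum, map_sum, sum_congr rfl hterm, sum_add_distrib, ← map_sum, ← map_sum,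
    sum_ite_eq', sum_ite_eq', if_pos (by simp; omega), if_pos (by simp), ← map_add]


end

section

variable {k : Type*} [Field k] [CharZero k]

@[simp]
lemma downOp_X_zero : downOp k (X 0) = 0 :=
  mkDerivation_X k _ 0

@[simp]
lemma downOp_X_succ (i : ℕ) : downOp k (X (i + 1)) = X i :=
  mkDerivation_X k _ (i + 1)

lemma mem_quadSpace_iff {m : ℕ} {p : MvPolynomial ℕ k} :
    p ∈ quadSpace k m ↔ ∃ c : ℕ → k, ∑ i ∈ range (m + 1), c i • (X i * X (m - i)) = p := by
  constructor
  · have hgen : {p : MvPolynomial ℕ k | ∃ i ≤ m, p = X i * X (m - i)} =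
        (fun i => X i * X (m - i)) '' ↑(range (m + 1)) := by
      ext p
      simp [eq_comm]
    rw [quadSpace, hgen, Finsupp.mem_span_image_iff_linearCombination]
    rintro ⟨l, hl, rfl⟩
    exact ⟨l, by rw [Finsupp.linearCombination_apply, Finsupp.sum_of_support_subset l hl _ (by simp)]⟩
  · rintro ⟨c, rfl⟩
    exact sum_mem fun i hi => Submodule.smul_mem _ _ <|
      Submodule.subset_span ⟨i, Nat.lt_succ_iff.mp (mem_range.mp hi), rfl⟩

lemma downOp_sum_smul_X_mul_X (c : ℕ → k) (n : ℕ) :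
    downOp k (∑ i ∈ range (n + 1 + 1), c i • (X i * X (n + 1 - i))) =
      ∑ j ∈ range (n + 1), (c j + c (j + 1)) • (X j * X (n - j)) := by
  have hleft : ∑ i ∈ range (n + 1 + 1), c i • (X (n + 1 - i) * downOp k (X i)) =
      ∑ j ∈ range (n + 1), c (j + 1) • (X j * X (n - j)) := by
    rw [sum_range_succ']
    simp [mul_comm]
  have hright : ∑ i ∈ range (n + 1 + 1), c i • (X i * downOp k (X (n + 1 - i))) =
      ∑ j ∈ range (n + 1), c j • (X j * X (n - j)) := by
    rw [sum_range_succ]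
    simp only [Nat.sub_self, downOp_X_zero, mul_zero, smul_zero, add_zero]
    refine sum_congr rfl fun j hj => ?_
    rw [Nat.sub_add_comm (Nat.lt_succ_iff.mp (mem_range.mp hj)), downOp_X_succ]
  simp only [map_sum, Derivation.map_smul, Derivation.leibniz, smul_eq_mul, smul_add]
  rw [sum_add_distrib, hleft, hright, ← sum_add_distrib]
  exact sum_congr rfl fun j _ => (add_smul _ _ _).symm

lemma sum_smul_X_mul_X_eq_zero_iff {d : ℕ → k} {n : ℕ} :
    ∑ j ∈ range (n + 1), d j • (X j * X (n - j) : MvPolynomial ℕ k) = 0 ↔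
      ∀ a ≤ n, d a + d (n - a) = 0 := by
  constructor
  · intro h a ha
    exact C_eq_zero.mp <| by rw [← pderiv_pderiv_sum_smul_X_mul_X d ha, h, map_zero, map_zero]
  · intro h
    have htwice : (2 : k) • ∑ j ∈ range (n + 1), d j • (X j * X (n - j) : MvPolynomial ℕ k) = 0 := by
      rw [two_smul]
      nth_rewrite 1 [← sum_smul_X_mul_X_reflect]
      rw [← sum_add_distrib]
      refine sum_eq_zero fun j hj => ?_
      rw [← add_smul, add_comm, h j (Nat.lt_succ_iff.mp (mem_range.mp hj)), zero_smul]
    exact (smul_eq_zero.mp htwice).resolve_left two_ne_zero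

lemma eq_zero_of_mem_quadSpace_of_downOp_eq_zero {m : ℕ} (hm : Odd m) {p : MvPolynomial ℕ k}
    (hp : p ∈ quadSpace k m) (hΔ : downOp k p = 0) : p = 0 := by
  obtain ⟨t, rfl⟩ := hm
  obtain ⟨c, rfl⟩ := mem_quadSpace_iff.mp hp
  rw [downOp_sum_smul_X_mul_X, sum_smul_X_mul_X_eq_zero_iff] at hΔ
  refine sum_smul_X_mul_X_eq_zero_iff.mpr <|
    eq_zero_of_add_succ_eq_zero_of_even (s := fun a => c a + c (2 * t + 1 - a)) (even_two_mul t)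
      (fun a ha => ?_) (by simp [add_comm])
  rw [show 2 * t + 1 - (a + 1) = 2 * t - a by omega, show 2 * t + 1 - a = 2 * t - a + 1 by omega]
  linear_combination hΔ a ha

lemma theta0_eq_sum (n : ℕ) :
    theta0 k n = ∑ j ∈ range (n + 1), (-1 : k) ^ j • (X j * X (n - j)) := by
  refine sum_congr rfl fun j _ => ?_
  rw [smul_eq_C_mul, map_pow, map_neg, map_one, mul_assoc]

lemma theta1_eq_sum (n : ℕ) :
    theta1 k n = ∑ i ∈ range (n + 1 + 1), ((-1 : k) ^ (i + 1) * i) • (X i * X (n + 1 - i)) := by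
  rw [sum_range_succ', theta1]
  simp only [Nat.cast_zero, mul_zero, zero_smul, add_zero]
  refine sum_congr rfl fun j _ => ?_
  rw [Nat.add_sub_add_right, smul_eq_C_mul]
  simp only [map_mul, map_pow, map_neg, map_one, map_add, map_natCast, Nat.cast_add, Nat.cast_one]
  ring

lemma downOp_theta1 (n : ℕ) : downOp k (theta1 k n) = theta0 k n := by
  rw [theta1_eq_sum, downOp_sum_smul_X_mul_X, theta0_eq_sum]
  refine sum_congr rfl fun j _ => ?_
  congr 1
  push_cast
  ring

lemma theta1_mem_quadSpace (n : ℕ) : theta1 k n ∈ quadSpace k (n + 1) :=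
  mem_quadSpace_iff.mpr ⟨_, (theta1_eq_sum n).symm⟩

end

/-- For even `n`, the first element above the root of any homogeneous quadratic `Δ`-cable
rooted at `θₙ⁽⁰⁾` is uniquely determined and equals `θₙ⁽¹⁾`. -/
theorem theta1_unique (k : Type*) [Field k] [CharZero k] :
    ∀ n : ℕ, Even n →
      downOp k (theta1 k n) = theta0 k n ∧
      ∀ p ∈ quadSpace k (n + 1), downOp k p = theta0 k n → p = theta1 k n := by
  intro n hn
  refine ⟨downOp_theta1 n, fun p hp hΔ => ?_⟩
  have hker : downOp k (p - theta1 k n) = 0 := by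
    rw [map_sub, hΔ, downOp_theta1, sub_self]
  exact sub_eq_zero.mp <| eq_zero_of_mem_quadSpace_of_downOp_eq_zero hn.add_one
    (sub_mem hp (theta1_mem_quadSpace n)) hker
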